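/- Define F₁(H,σ) := (1 − H²)·(−(9/8)(σ² + H²) − (3/4)Hσ − (1/3)(1 − H²)). Then for all real σ and all H with −1 < H < 1 one has F₁(H,σ) < 0, and for all real σ one has F₁(1,σ) = F₁(−1,σ) = 0. Consequently, any differentiable solution (H_N, σ_N) of dH_N/dτ = F₁(H_N, σ_N) with −1 < H_N(τ) < 1 on an interval has strictly decreasing first component, and there are no periodic orbits of the compactified system with −1 < H_N < 1. -/

import Mathlib

/-!
For `|H| < 1` both factors of `F₁` have fixed signs: `1 - H²` is positive, while the second
factor is minus a positive definite quadratic form in `(σ, H)` minus `(1 - H²) / 3`, hence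
negative. So `H_N` decreases strictly along interior solutions by the mean value theorem, which
a periodic orbit, returning to its starting value, cannot do.
-/

/-- First component of the compactified expansion-normalised vector field. -/
noncomputable def F₁ (H σ : ℝ) : ℝ :=
  (1 - H ^ 2) * (-(9 / 8) * (σ ^ 2 + H ^ 2) - (3 / 4) * (H * σ) - (1 / 3) * (1 - H ^ 2))

lemma F₁_neg {H : ℝ} (σ : ℝ) (h₁ : -1 < H) (h₂ : H < 1) : F₁ H σ < 0 := by
  have hfactor : 0 < 1 - H ^ 2 := by nlinarith
  have hform : 0 ≤ 9 / 8 * (σ ^ 2 + H ^ 2) + 3 / 4 * (H * σ) := by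
    nlinarith [sq_nonneg (σ + H / 3), sq_nonneg H]
  exact mul_neg_of_pos_of_neg hfactor (by linarith)

lemma F₁_of_sq_eq_one {H : ℝ} (σ : ℝ) (h : H ^ 2 = 1) : F₁ H σ = 0 := by
  simp [F₁, h]

lemma strictAntiOn_of_hasDerivAt_neg {I : Set ℝ} (hI : I.OrdConnected) {f f' : ℝ → ℝ}
    (hf : ∀ t ∈ I, HasDerivAt f (f' t) t) (hf' : ∀ t ∈ I, f' t < 0) : StrictAntiOn f I :=
  strictAntiOn_of_hasDerivWithinAt_neg hI.convex
    (fun t ht => (hf t ht).continuousAt.continuousWithinAt)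
    (fun t ht => (hf t (interior_subset ht)).hasDerivWithinAt)
    (fun t ht => hf' t (interior_subset ht))

lemma Function.Periodic.not_strictAnti {f : ℝ → ℝ} {T : ℝ} (hf : Function.Periodic f T)
    (hT : 0 < T) : ¬ StrictAnti f := fun hanti => by
  have h := hanti hT
  rw [← hf 0, zero_add] at h
  exact lt_irrefl _ h

theorem no_periodic_orbits :
    (∀ (H σ : ℝ), -1 < H → H < 1 → F₁ H σ < 0) ∧
    (∀ σ : ℝ, F₁ 1 σ = 0 ∧ F₁ (-1) σ = 0) ∧
    (∀ (I : Set ℝ), I.OrdConnected → ∀ (H σ : ℝ → ℝ),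
      (∀ t ∈ I, HasDerivAt H (F₁ (H t) (σ t)) t) →
      (∀ t ∈ I, -1 < H t ∧ H t < 1) →
      StrictAntiOn H I) ∧
    ¬ ∃ (H σ : ℝ → ℝ) (T : ℝ), 0 < T ∧
        (∀ t : ℝ, HasDerivAt H (F₁ (H t) (σ t)) t) ∧
        (∀ t : ℝ, -1 < H t ∧ H t < 1) ∧
        (∀ t : ℝ, H (t + T) = H t) := by
  refine ⟨fun H σ => F₁_neg σ,
    fun σ => ⟨F₁_of_sq_eq_one σ (by norm_num), F₁_of_sq_eq_one σ (by norm_num)⟩,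
    fun I hI H σ hd hb =>
      strictAntiOn_of_hasDerivAt_neg hI hd fun t ht => F₁_neg _ (hb t ht).1 (hb t ht).2, ?_⟩
  rintro ⟨H, σ, T, hT, hd, hb, hperiodic⟩
  exact Function.Periodic.not_strictAnti hperiodic hT <|
    strictAnti_of_hasDerivAt_neg hd fun t => F₁_neg _ (hb t).1 (hb t).2
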